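/- Let ū_h ∈ U with ‖ū_h‖_{X*} ≤ 1/α, ȳ_h ∈ Y, and w̄_h ∈ W be arbitrary; set ρ_y := Aȳ_h − Bū_h ∈ W*. Let ζ_h be a subgradient of the norm ‖·‖_X at B*w̄_h and ζ̂ a subgradient of ‖·‖_X at B*ŵ; set ρ_u := αū_h − ζ_h ∈ U and D := (ζ̂ − ζ_h)(B*(ŵ − w̄_h)). Then (1/2)‖Cȳ_h − g^δ‖_G² − (1/2)‖Cȳ − g^δ‖_G² ≤ (1/α)(−ρ_u)(B*ŵ) + (1/α)D + ‖C(A⁻¹ρ_y)‖_G · ‖Cȳ_h − g^δ‖_G. -/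

import Mathlib

/-!
The discrepancy is convex, so its error is bounded by the inner product of `C ȳ_h - g^δ` with
`C (ȳ_h - ȳ)`. Because `ŵ` is the adjoint state of `ȳ_h`, this inner product equals
`-⟨A (ȳ_h - ȳ), ŵ⟩ = -ρ_y(ŵ) - (ū_h - ū)(B*ŵ)`. The residual `ρ_y(ŵ)` is again such an inner
product, hence bounded by Cauchy–Schwarz, and `ū(B*ŵ) ≤ ‖B*ŵ‖ / α` is controlled through the
subgradients: `ζ̂` attains the norm at `B*ŵ`, and the symmetric Bregman distance `D` is nonnegative.
-/

open RealInnerProductSpace NormedSpace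

section NormSubgradient

variable {X : Type*} [NormedAddCommGroup X] [NormedSpace ℝ X]

def IsNormSubgradient (ζ : StrongDual ℝ X) (x : X) : Prop :=
  ∀ x' : X, ζ x' - ζ x ≤ ‖x'‖ - ‖x‖

namespace IsNormSubgradient

variable {ζ ζ' : StrongDual ℝ X} {x x' : X}

theorem norm_le_apply (h : IsNormSubgradient ζ x) : ‖x‖ ≤ ζ x := by
  simpa using h 0

theorem apply_le_norm (h : IsNormSubgradient ζ x) (y : X) : ζ y ≤ ‖y‖ := by
  have hxy := h (x + y)
  rw [map_add] at hxy
  linarith [norm_add_le x y]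

theorem apply_self (h : IsNormSubgradient ζ x) : ζ x = ‖x‖ :=
  le_antisymm (h.apply_le_norm x) h.norm_le_apply

/-- The right-hand side equals `‖x‖ + (‖x'‖ - ζ x')`. -/
theorem norm_le_apply_add_bregman (h : IsNormSubgradient ζ x) (h' : IsNormSubgradient ζ' x') :
    ‖x‖ ≤ ζ' x + (ζ - ζ') (x - x') := by
  simp only [sub_apply, map_sub]
  linarith [h.apply_self, h'.apply_self, h.apply_le_norm x']

end IsNormSubgradient

end NormSubgradient

theorem half_sq_norm_sub_half_sq_norm_le_inner {G : Type*} [NormedAddCommGroup G]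
    [InnerProductSpace ℝ G] (a b : G) : (1/2) * ‖a‖^2 - (1/2) * ‖b‖^2 ≤ ⟪a - b, a⟫ := by
  have h := norm_sub_sq_real a (a - b)
  rw [sub_sub_cancel, real_inner_comm] at h
  nlinarith [sq_nonneg ‖a - b‖]

theorem inner_apply_eq_neg_of_adjoint_state {Y W G : Type*}
    [NormedAddCommGroup Y] [NormedSpace ℝ Y] [NormedAddCommGroup W] [NormedSpace ℝ W]
    [NormedAddCommGroup G] [InnerProductSpace ℝ G]
    {A : Y →L[ℝ] StrongDual ℝ W} {Astar : W →L[ℝ] StrongDual ℝ Y}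
    (hAadj : ∀ (y : Y) (w : W), A y w = Astar w y)
    {C : Y →L[ℝ] G} {Cstar : G →L[ℝ] StrongDual ℝ Y}
    (hCadj : ∀ (y : Y) (g : G), ⟪C y, g⟫ = Cstar g y)
    {r : G} {w : W} (hw : Astar w = -Cstar r) (y : Y) :
    ⟪C y, r⟫ = -A y w := by
  rw [hCadj, hAadj, hw, neg_apply, neg_neg]

theorem stmt_10_general
    {X G Y W : Type*}
    [NormedAddCommGroup X] [NormedSpace ℝ X]
    [NormedAddCommGroup G] [InnerProductSpace ℝ G]
    [NormedAddCommGroup Y] [NormedSpace ℝ Y]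
    [NormedAddCommGroup W] [NormedSpace ℝ W]
    (A : Y ≃L[ℝ] StrongDual ℝ W) (Astar : W ≃L[ℝ] StrongDual ℝ Y)
    (hAadj : ∀ (y : Y) (w : W), A y w = Astar w y)
    (Bstar : W →L[ℝ] X) (B : StrongDual ℝ X →L[ℝ] StrongDual ℝ W)
    (hB : ∀ (u : StrongDual ℝ X) (w : W), B u w = u (Bstar w))
    (C : Y →L[ℝ] G) (Cstar : G →L[ℝ] StrongDual ℝ Y)
    (hCadj : ∀ (y : Y) (g : G), ⟪C y, g⟫ = Cstar g y)
    (gδ : G) (α : ℝ) (hα : 0 < α)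
    (ubar : StrongDual ℝ X) (ybar : Y)
    (hubar : ‖ubar‖ ≤ 1/α) (hybar : ybar = A.symm (B ubar))
    (yh : Y) (what : W)
    (hwhat : what = Astar.symm (-(Cstar (C yh - gδ))))
    (uh : StrongDual ℝ X) (wh : W)
    (ζh ζhat : StrongDual ℝ X)
    (hζh : ∀ x : X, ζh x - ζh (Bstar wh) ≤ ‖x‖ - ‖Bstar wh‖)
    (hζhat : ∀ x : X, ζhat x - ζhat (Bstar what) ≤ ‖x‖ - ‖Bstar what‖) :
    (1/2) * ‖C yh - gδ‖^2 - (1/2) * ‖C ybar - gδ‖^2 ≤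
      (1/α) * ((-(α • uh - ζh)) (Bstar what))
      + (1/α) * ((ζhat - ζh) (Bstar (what - wh)))
      + ‖C (A.symm (A yh - B uh))‖ * ‖C yh - gδ‖ := by
  have hadj : ∀ y : Y, ⟪C y, C yh - gδ⟫ = -A y what :=
    inner_apply_eq_neg_of_adjoint_state (A := (A : Y →L[ℝ] StrongDual ℝ W))
      (Astar := (Astar : W →L[ℝ] StrongDual ℝ Y)) hAadj hCadj
      (hwhat ▸ Astar.apply_symm_apply _)
  have hdiff : C yh - gδ - (C ybar - gδ) = C (yh - ybar) := by rw [map_sub]; abel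
  have hA : A (yh - ybar) = (A yh - B uh) + B (uh - ubar) := by
    rw [map_sub, map_sub, hybar, A.apply_symm_apply]; abel
  have hresidual : -(A yh - B uh) what ≤ ‖C (A.symm (A yh - B uh))‖ * ‖C yh - gδ‖ := by
    have h := real_inner_le_norm (C (A.symm (A yh - B uh))) (C yh - gδ)
    rwa [hadj, A.apply_symm_apply] at h
  have hubar_le :
      ubar (Bstar what) ≤ (1/α) * (ζh (Bstar what) + (ζhat - ζh) (Bstar (what - wh))) :=
    calc ubar (Bstar what) ≤ ‖ubar‖ * ‖Bstar what‖ :=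
          (le_abs_self _).trans (ubar.le_opNorm _)
      _ ≤ (1/α) * ‖Bstar what‖ := by gcongr
      _ ≤ _ := by
        rw [map_sub]
        gcongr
        exact IsNormSubgradient.norm_le_apply_add_bregman hζhat hζh
  have hgap := half_sq_norm_sub_half_sq_norm_le_inner (C yh - gδ) (C ybar - gδ)
  rw [hdiff, hadj, hA, add_apply, hB, sub_apply uh] at hgap
  have hsplit : (1/α) * (-(α • uh - ζh)) (Bstar what) =
      -uh (Bstar what) + (1/α) * ζh (Bstar what) := by
    simp only [neg_apply, sub_apply, smul_apply, smul_eq_mul]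
    field_simp
    ring
  linarith

/-- A posteriori estimate of the discrepancy functional error for Ivanov
regularization in terms of the subgradient residual and a Bregman distance. -/
theorem stmt_10
    {X G Y W : Type*}
    [NormedAddCommGroup X] [NormedSpace ℝ X] [CompleteSpace X]
    [NormedAddCommGroup G] [InnerProductSpace ℝ G] [CompleteSpace G]
    [NormedAddCommGroup Y] [NormedSpace ℝ Y] [CompleteSpace Y]
    [NormedAddCommGroup W] [NormedSpace ℝ W] [CompleteSpace W]
    (A : Y ≃L[ℝ] StrongDual ℝ W) (Astar : W ≃L[ℝ] StrongDual ℝ Y)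
    (hAadj : ∀ (y : Y) (w : W), A y w = Astar w y)
    (Bstar : W →L[ℝ] X) (B : StrongDual ℝ X →L[ℝ] StrongDual ℝ W)
    (hB : ∀ (u : StrongDual ℝ X) (w : W), B u w = u (Bstar w))
    (C : Y →L[ℝ] G) (Cstar : G →L[ℝ] StrongDual ℝ Y)
    (hCadj : ∀ (y : Y) (g : G), ⟪C y, g⟫ = Cstar g y)
    (gδ : G) (α : ℝ) (hα : 0 < α)
    (ubar : StrongDual ℝ X) (ybar : Y)
    (hubar : ‖ubar‖ ≤ 1/α) (hybar : ybar = A.symm (B ubar))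
    (hmin : ∀ u : StrongDual ℝ X, ‖u‖ ≤ 1/α →
      (1/2) * ‖C ybar - gδ‖^2 ≤ (1/2) * ‖C (A.symm (B u)) - gδ‖^2)
    (yh : Y) (what : W)
    (hwhat : what = Astar.symm (-(Cstar (C yh - gδ))))
    (uh : StrongDual ℝ X) (huh : ‖uh‖ ≤ 1/α) (wh : W)
    (ζh ζhat : StrongDual ℝ X)
    (hζh : ∀ x : X, ζh x - ζh (Bstar wh) ≤ ‖x‖ - ‖Bstar wh‖)
    (hζhat : ∀ x : X, ζhat x - ζhat (Bstar what) ≤ ‖x‖ - ‖Bstar what‖) :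
    (1/2) * ‖C yh - gδ‖^2 - (1/2) * ‖C ybar - gδ‖^2 ≤
      (1/α) * ((-(α • uh - ζh)) (Bstar what))
      + (1/α) * ((ζhat - ζh) (Bstar (what - wh)))
      + ‖C (A.symm (A yh - B uh))‖ * ‖C yh - gδ‖ :=
  stmt_10_general A Astar hAadj Bstar B hB C Cstar hCadj gδ α hα ubar ybar hubar hybar yh what hwhat
    uh wh ζh ζhat hζh hζhat
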